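/- Fix $e\ge2$ and $k\ge2$. For every standard tableau $\mathtt t$ of size $n$ with at most $k$ columns, the combinatorial degree $\deg_e(\mathtt t)$ (defined recursively via addable/removable nodes) equals the path degree $\deg_e(\pi_{\mathtt t})=\sum_{a=0}^{n-1}\sum_{\alpha\in\Phi^+}\deg_{e,\alpha}(\pi_{\mathtt t}(a),\pi_{\mathtt t}(a+1))$. -/

import Mathlib

open scoped Classical
noncomputable section

/-- A standard tableau of size `n` (0-based nodes): injective, image is a
Young diagram (downward closed), entries increase along rows and columns. -/
def IsStdTab (n : ℕ) (t : Fin n → ℕ × ℕ) : Prop :=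
  Function.Injective t ∧
  (∀ r : Fin n, ∀ a b : ℕ, a ≤ (t r).1 → b ≤ (t r).2 → ∃ r' : Fin n, t r' = (a, b)) ∧
  (∀ r s : Fin n, (t r).1 ≤ (t s).1 → (t r).2 ≤ (t s).2 → r ≤ s)

/-- Number of entries among the first `a` entries lying in column `j`. -/
def cntCol (n : ℕ) (t : Fin n → ℕ × ℕ) (a j : ℕ) : ℕ :=
  (Finset.univ.filter fun r : Fin n => (r : ℕ) < a ∧ (t r).2 = j).card

/-- The residue of a node (0-based): column minus row, mod `e`. -/
def resNode (e : ℕ) (v : ℕ × ℕ) : ZMod e := (v.2 : ZMod e) - (v.1 : ZMod e)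

/-- The Young diagram formed by the first `a` entries of `t`. -/
def diagOf (n : ℕ) (t : Fin n → ℕ × ℕ) (a : ℕ) : Finset (ℕ × ℕ) :=
  (Finset.univ.filter fun r : Fin n => (r : ℕ) < a).image t

/-- `x` is a removable node of the Young diagram `D`. -/
def Removable (D : Finset (ℕ × ℕ)) (x : ℕ × ℕ) : Prop :=
  x ∈ D ∧ (x.1 + 1, x.2) ∉ D ∧ (x.1, x.2 + 1) ∉ D

/-- `x` is an addable node for the Young diagram `D`. -/
def Addable (D : Finset (ℕ × ℕ)) (x : ℕ × ℕ) : Prop :=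
  x ∉ D ∧ (x.1 = 0 ∨ (x.1 - 1, x.2) ∈ D) ∧ (x.2 = 0 ∨ (x.1, x.2 - 1) ∈ D)

/-- `d_A(D)`: the number of addable nodes of the same residue as `A` strictly
below `A`, minus the number of removable such nodes (for diagrams with at
most `n` cells all relevant nodes have coordinates `< n + 2`). -/
def dnode (e n : ℕ) (D : Finset (ℕ × ℕ)) (A : ℕ × ℕ) : ℤ :=
  (((Finset.range (n + 2) ×ˢ Finset.range (n + 2)).filter
      fun x => Addable D x ∧ resNode e x = resNode e A ∧ A.1 < x.1).card : ℤ) -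
  (((Finset.range (n + 2) ×ˢ Finset.range (n + 2)).filter
      fun x => Removable D x ∧ resNode e x = resNode e A ∧ A.1 < x.1).card : ℤ)

/-- The combinatorial degree of a standard tableau (unfolding the recursion
`deg(t) = d_{t(n)}(Shape t) + deg(t↓_{n-1})`). -/
def tabDeg (e n : ℕ) (t : Fin n → ℕ × ℕ) : ℤ :=
  ∑ r : Fin n, dnode e n (diagOf n t ((r : ℕ) + 1)) (t r)

/-- `(π_t(a) + ρ, ε_r - ε_s)` in terms of column counts, where
`ρ = ∑ (k - i) ε_i`. -/
def pairVal (n : ℕ) (t : Fin n → ℕ × ℕ) (a r s : ℕ) : ℤ :=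
  (cntCol n t a r : ℤ) - (cntCol n t a s : ℤ) + ((s : ℤ) - (r : ℤ))

/-- `deg_{e,α}(u,v)` in terms of the pairings `U = (u+ρ,α)`, `V = (v+ρ,α)`. -/
def degPairStep (e : ℕ) (U V : ℤ) : ℤ :=
  if (0 < U ∧ (e : ℤ) ∣ U) ∧ V < U then 1
  else if (0 < V ∧ (e : ℤ) ∣ V) ∧ V < U then -1
  else 0

/-- The degree of the path `π_t`, summed over all steps and all positive
roots `ε_r - ε_s`, `r < s < k`. -/
def pathDegK (e k n : ℕ) (t : Fin n → ℕ × ℕ) : ℤ :=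
  ∑ a ∈ Finset.range n, ∑ r ∈ Finset.range k, ∑ s ∈ Finset.Ico (r + 1) k,
    degPairStep e (pairVal n t a r s) (pairVal n t (a + 1) r s)

/-!
Adding the entry `a` of `t`, in column `j`, to the diagram with column lengths `c` changes
only the pairings with the roots `ε_m - ε_j`, `m < j`, each from `w m := c m - c j + j - m`
to `w m - 1`; so the path degree of this step is `∑_{m<j} ([e ∣ w m] - [e ∣ w m - 1])`.
Along a run of columns of equal length `w` drops by one per column, so the sum telescopes to
`[e ∣ w m]` for every column `m` starting a run minus `[e ∣ w m - 1]` for every column `m`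
ending one. These columns carry exactly the addable, resp. removable, nodes below the new node,
and `w m`, resp. `w m - 1`, is their content difference with it, so the two terms count those
of the same residue: the sum is `d_{t(a)}`.
-/

open Finset

lemma Int.natCast_not_dvd_one {e : ℕ} (he : 2 ≤ e) : ¬ (e : ℤ) ∣ 1 := by
  norm_cast; rw [Nat.dvd_one]; omega

namespace Finset

lemma eq_range_card_of_isLowerSet {S : Finset ℕ} (hS : IsLowerSet (S : Set ℕ)) :
    S = range #S := by
  rcases hS.eq_univ_or_Iio with huniv | ⟨b, hb⟩
  · exact absurd (huniv ▸ S.finite_toSet) Set.infinite_univ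
  · have hSb : S = range b := coe_injective (by rw [hb, coe_range])
    rw [hSb, card_range]

lemma card_filter_eq_card_filter_of_graph {N j : ℕ} {p : ℕ × ℕ → Prop} [DecidablePred p]
    {q : ℕ → Prop} [DecidablePred q] (f : ℕ → ℕ)
    (hp : ∀ i m, p (i, m) ↔ m < j ∧ q m ∧ i = f m)
    (hN : ∀ m < j, f m < N ∧ m < N) :
    #((range N ×ˢ range N).filter p) = #((range j).filter q) := by
  have hgraph :
      (range N ×ˢ range N).filter p = ((range j).filter q).image (fun m => (f m, m)) := by
    ext ⟨i, m⟩
    simp only [mem_filter, mem_product, mem_range, mem_image, hp, Prod.mk.injEq]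
    constructor
    · rintro ⟨-, hm, hq, rfl⟩
      exact ⟨m, ⟨hm, hq⟩, rfl, rfl⟩
    · rintro ⟨m, ⟨hm, hq⟩, rfl, rfl⟩
      exact ⟨hN m hm, hm, hq, rfl⟩
  rw [hgraph, card_image_of_injective _ fun m m' h => (Prod.mk.inj h).2]

/-- Telescoping along the maximal runs of consecutive indices on which `w` drops by one:
each run contributes `g` at the first value of the run minus `g` at the last value minus one. -/
lemma sum_range_sub_pred_eq_runs {M : Type*} [AddCommGroup M] (g : ℤ → M) (w : ℕ → ℤ)
    (j : ℕ) :
    ∑ m ∈ range j, (g (w m) - g (w m - 1)) =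
      ∑ m ∈ (range j).filter (fun m => m = 0 ∨ w (m - 1) ≠ w m + 1), g (w m) -
      ∑ m ∈ (range j).filter (fun m => m + 1 = j ∨ w (m + 1) ≠ w m - 1), g (w m - 1) := by
  have hinterior :
      ∑ m ∈ (range j).filter (fun m => ¬ (m = 0 ∨ w (m - 1) ≠ w m + 1)), g (w m) =
      ∑ m ∈ (range j).filter (fun m => ¬ (m + 1 = j ∨ w (m + 1) ≠ w m - 1)),
        g (w m - 1) := by
    refine sum_nbij' (· - 1) (· + 1) ?_ ?_ ?_ ?_ ?_
    · intro m hm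
      simp only [mem_filter, mem_range, not_or, not_not] at hm ⊢
      refine ⟨by omega, by omega, ?_⟩
      rw [Nat.sub_add_cancel (by omega)]; omega
    · intro m hm
      simp only [mem_filter, mem_range, not_or, not_not] at hm ⊢
      refine ⟨by omega, by omega, ?_⟩
      rw [Nat.add_sub_cancel]; omega
    · intro m hm
      simp only [mem_filter, not_or] at hm
      omega
    · intro m _
      simp
    · intro m hm
      simp only [mem_filter, mem_range, not_or, not_not] at hm
      rw [hm.2.2, add_sub_cancel_right]
  have hstart := sum_filter_add_sum_filter_not (range j)
    (fun m => m = 0 ∨ w (m - 1) ≠ w m + 1) (fun m => g (w m))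
  have hend := sum_filter_add_sum_filter_not (range j)
    (fun m => m + 1 = j ∨ w (m + 1) ≠ w m - 1) (fun m => g (w m - 1))
  rw [sum_sub_distrib, ← hstart, ← hend, hinterior]
  abel

end Finset

/-- `(λ + ρ, ε_r - ε_s)` for the weight `λ` with column lengths `c`, so that
`pairVal n t a = rootPairing (cntCol n t a)`. -/
def rootPairing (c : ℕ → ℕ) (r s : ℕ) : ℤ :=
  (c r : ℤ) - (c s : ℤ) + ((s : ℤ) - (r : ℤ))

lemma rootPairing_of_add_single {c c' : ℕ → ℕ} {j : ℕ}
    (hc' : ∀ m, c' m = c m + if m = j then 1 else 0) (r s : ℕ) :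
    rootPairing c' r s =
      rootPairing c r s + (if r = j then 1 else 0) - (if s = j then 1 else 0) := by
  unfold rootPairing
  rw [hc', hc']
  split_ifs <;> push_cast <;> ring

lemma degPairStep_eq_zero_of_le {e : ℕ} {U V : ℤ} (h : U ≤ V) : degPairStep e U V = 0 := by
  unfold degPairStep
  rw [if_neg (by omega), if_neg (by omega)]

lemma degPairStep_sub_one {e : ℕ} (he : 2 ≤ e) {U : ℤ} (hU : 2 ≤ U) :
    degPairStep e U (U - 1) =
      (if (e : ℤ) ∣ U then 1 else 0) - (if (e : ℤ) ∣ U - 1 then 1 else 0) := by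
  have hcoprime : ¬ ((e : ℤ) ∣ U ∧ (e : ℤ) ∣ U - 1) := fun ⟨h, h'⟩ =>
    Int.natCast_not_dvd_one he (by simpa using dvd_sub h h')
  unfold degPairStep
  split_ifs <;> simp_all <;> omega

lemma sum_degPairStep_of_add_single (e k : ℕ) {c c' : ℕ → ℕ} {j : ℕ}
    (hc' : ∀ m, c' m = c m + if m = j then 1 else 0) (hjk : j < k) :
    ∑ r ∈ range k, ∑ s ∈ Ico (r + 1) k,
        degPairStep e (rootPairing c r s) (rootPairing c' r s)
      = ∑ m ∈ range j, degPairStep e (rootPairing c m j) (rootPairing c m j - 1) := by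
  have hterm : ∀ r s, r < s → degPairStep e (rootPairing c r s) (rootPairing c' r s) =
      if s = j then degPairStep e (rootPairing c r j) (rootPairing c r j - 1) else 0 := by
    intro r s hrs
    rw [rootPairing_of_add_single hc']
    by_cases hs : s = j
    · subst hs
      rw [if_neg (by omega : r ≠ s), if_pos rfl, if_pos rfl, add_zero]
    · rw [if_neg hs, if_neg hs, sub_zero]
      exact degPairStep_eq_zero_of_le (by split_ifs <;> omega)
  have hrange : (range k).filter (fun r => j ∈ Ico (r + 1) k) = range j := by
    ext r; simp only [mem_filter, mem_range, mem_Ico]; omega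
  calc _ = ∑ r ∈ range k, if j ∈ Ico (r + 1) k then
          degPairStep e (rootPairing c r j) (rootPairing c r j - 1) else 0 := by
        refine sum_congr rfl fun r _ => ?_
        rw [sum_congr rfl fun s hs => hterm r s (mem_Ico.mp hs).1, sum_ite_eq']
    _ = _ := by rw [← sum_filter, hrange]

lemma resNode_eq_resNode_iff (e : ℕ) (x y : ℕ × ℕ) :
    resNode e x = resNode e y ↔ (e : ℤ) ∣ ((y.2 : ℤ) - y.1) - ((x.2 : ℤ) - x.1) := by
  rw [resNode, resNode, ← ZMod.intCast_eq_intCast_iff_dvd_sub]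
  push_cast
  rfl

lemma addable_iff_of_mem_iff {D : Finset (ℕ × ℕ)} {c : ℕ → ℕ}
    (hD : ∀ x, x ∈ D ↔ x.1 < c x.2) (x : ℕ × ℕ) :
    Addable D x ↔ x.1 = c x.2 ∧ (x.2 = 0 ∨ x.1 < c (x.2 - 1)) := by
  simp only [Addable, hD]
  omega

lemma removable_iff_of_mem_iff {D : Finset (ℕ × ℕ)} {c : ℕ → ℕ}
    (hD : ∀ x, x ∈ D ↔ x.1 < c x.2) (x : ℕ × ℕ) :
    Removable D x ↔ x.1 + 1 = c x.2 ∧ c (x.2 + 1) ≤ x.1 := by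
  simp only [Removable, hD]
  omega

section AddNode

variable {e : ℕ} {c c' : ℕ → ℕ} {j : ℕ} {D : Finset (ℕ × ℕ)}

lemma addable_below_iff (he : 2 ≤ e) (hc : Antitone c) (hjc : j ≠ 0 → c j < c (j - 1))
    (hc' : ∀ m, c' m = c m + if m = j then 1 else 0) (hD : ∀ x, x ∈ D ↔ x.1 < c' x.2)
    (i m : ℕ) :
    Addable D (i, m) ∧ resNode e (i, m) = resNode e (c j, j) ∧ c j < i ↔
      m < j ∧ ((m = 0 ∨ rootPairing c (m - 1) j ≠ rootPairing c m j + 1) ∧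
        (e : ℤ) ∣ rootPairing c m j) ∧ i = c m := by
  have hdiff : (j : ℤ) - c j - ((m : ℤ) - i) = rootPairing c m j + (i - c m) := by
    unfold rootPairing; ring
  rw [addable_iff_of_mem_iff hD, resNode_eq_resNode_iff, hc', hc']
  simp only [hdiff]
  constructor
  · rintro ⟨⟨hi, hstart⟩, hdvd, hbelow⟩
    have hmj : m < j := by
      by_contra hmj
      rcases (not_lt.mp hmj).lt_or_eq with hjm | rfl
      · have := hc hjm.le
        rw [if_neg hjm.ne'] at hi
        omega
      · rw [if_pos rfl] at hi
        refine Int.natCast_not_dvd_one he ?_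
        convert hdvd using 1
        unfold rootPairing; omega
    rw [if_neg hmj.ne] at hi
    subst hi
    rw [if_neg (by omega)] at hstart
    have := hc (Nat.sub_le m 1)
    refine ⟨hmj, ⟨?_, by simpa using hdvd⟩, rfl⟩
    unfold rootPairing; omega
  · rintro ⟨hmj, ⟨hstart, hdvd⟩, rfl⟩
    have := hjc (by omega)
    have := hc (show m ≤ j - 1 by omega)
    have := hc (Nat.sub_le m 1)
    rw [if_neg hmj.ne, if_neg (by omega)]
    simp only [rootPairing] at hstart
    refine ⟨⟨by omega, by omega⟩, by simpa using hdvd, by omega⟩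

lemma removable_below_iff (he : 2 ≤ e) (hc : Antitone c) (hjc : j ≠ 0 → c j < c (j - 1))
    (hc' : ∀ m, c' m = c m + if m = j then 1 else 0) (hD : ∀ x, x ∈ D ↔ x.1 < c' x.2)
    (i m : ℕ) :
    Removable D (i, m) ∧ resNode e (i, m) = resNode e (c j, j) ∧ c j < i ↔
      m < j ∧ ((m + 1 = j ∨ rootPairing c (m + 1) j ≠ rootPairing c m j - 1) ∧
        (e : ℤ) ∣ rootPairing c m j - 1) ∧ i = c m - 1 := by
  have hdiff : (j : ℤ) - c j - ((m : ℤ) - i) = rootPairing c m j + (i - c m) := by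
    unfold rootPairing; ring
  rw [removable_iff_of_mem_iff hD, resNode_eq_resNode_iff, hc', hc']
  simp only [hdiff]
  have hstep := hc (Nat.le_add_right m 1)
  constructor
  · rintro ⟨⟨hi, hend⟩, hdvd, hbelow⟩
    have hmj : m < j := by
      by_contra hmj
      have := hc (not_lt.mp hmj)
      split_ifs at hi <;> omega
    rw [if_neg hmj.ne] at hi
    refine ⟨hmj, ⟨?_, ?_⟩, by omega⟩
    · unfold rootPairing; split_ifs at hend <;> omega
    · convert hdvd using 1; omega
  · rintro ⟨hmj, ⟨hend, hdvd⟩, rfl⟩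
    have hjm := hjc (by omega)
    have hjm' := hc (show m ≤ j - 1 by omega)
    -- in column `j - 1` the run condition is automatic; removability comes from `e ∤ 1`
    have hgap : m + 1 = j → c j + 1 < c m := by
      rintro rfl
      by_contra hgap
      refine Int.natCast_not_dvd_one he ?_
      convert hdvd using 1
      unfold rootPairing; omega
    rw [if_neg hmj.ne]
    refine ⟨⟨by omega, ?_⟩, ?_, ?_⟩
    · split_ifs with hm1
      · have := hgap hm1; subst hm1; omega
      · have := hc (show m + 1 ≤ j - 1 by omega)
        unfold rootPairing at hend; omega
    · convert hdvd using 1; omega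
    · by_cases hm1 : m + 1 = j
      · have := hgap hm1; subst hm1; omega
      · have := hc (show m + 1 ≤ j - 1 by omega)
        unfold rootPairing at hend; omega

lemma dnode_eq_sum_degPairStep (he : 2 ≤ e) (hc : Antitone c) (hjc : j ≠ 0 → c j < c (j - 1))
    (hc' : ∀ m, c' m = c m + if m = j then 1 else 0) (hD : ∀ x, x ∈ D ↔ x.1 < c' x.2)
    {N : ℕ} (hcN : c 0 ≤ N) (hjN : j ≤ N) :
    dnode e N D (c j, j) =
      ∑ m ∈ range j, degPairStep e (rootPairing c m j) (rootPairing c m j - 1) := by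
  have hlt : ∀ m < j, c j < c m := fun m hm => (hjc (by omega)).trans_le (hc (by omega))
  have hbound : ∀ m < j, c m ≤ N := fun m _ => (hc (Nat.zero_le m)).trans hcN
  have hpairing : ∀ m ∈ range j, 2 ≤ rootPairing c m j := by
    intro m hm
    have := hlt m (mem_range.mp hm)
    have := mem_range.mp hm
    unfold rootPairing; omega
  unfold dnode
  dsimp only
  rw [card_filter_eq_card_filter_of_graph c (addable_below_iff he hc hjc hc' hD)
      (fun m hm => ⟨by have := hbound m hm; omega, by omega⟩),
    card_filter_eq_card_filter_of_graph (fun m => c m - 1) (removable_below_iff he hc hjc hc' hD)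
      (fun m hm => ⟨by have := hbound m hm; omega, by omega⟩),
    sum_congr rfl fun m hm => degPairStep_sub_one he (hpairing m hm),
    sum_range_sub_pred_eq_runs (fun z => if (e : ℤ) ∣ z then (1 : ℤ) else 0), sum_boole,
    sum_boole, filter_filter, filter_filter]

end AddNode

section StandardTableau

variable {n : ℕ} {t : Fin n → ℕ × ℕ}

lemma cntCol_le (a m : ℕ) : cntCol n t a m ≤ a :=
  calc cntCol n t a m ≤ #{r : Fin n | (r : ℕ) < a} :=
        card_le_card fun r hr => by simp only [mem_filter] at hr ⊢; exact ⟨hr.1, hr.2.1⟩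
    _ ≤ a := by rw [Fin.card_filter_val_lt]; exact min_le_right n a

lemma mem_diagOf {a : ℕ} {x : ℕ × ℕ} :
    x ∈ diagOf n t a ↔ ∃ r : Fin n, (r : ℕ) < a ∧ t r = x := by
  simp [diagOf]

lemma apply_mem_diagOf_succ (a : Fin n) : t a ∈ diagOf n t (a + 1) :=
  mem_diagOf.mpr ⟨a, Nat.lt_succ_self a, rfl⟩

lemma IsStdTab.mem_diagOf_of_le (ht : IsStdTab n t) {a i m i' m' : ℕ}
    (hx : (i, m) ∈ diagOf n t a) (hi : i' ≤ i) (hm : m' ≤ m) : (i', m') ∈ diagOf n t a := by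
  obtain ⟨r, hra, hr⟩ := mem_diagOf.mp hx
  obtain ⟨r', hr'⟩ := ht.2.1 r i' m' (by rw [hr]; exact hi) (by rw [hr]; exact hm)
  have hle : r' ≤ r := ht.2.2 r' r (by rw [hr, hr']; exact hi) (by rw [hr, hr']; exact hm)
  exact mem_diagOf.mpr ⟨r', lt_of_le_of_lt hle hra, hr'⟩

lemma IsStdTab.mem_diagOf_iff (ht : IsStdTab n t) {a : ℕ} (i m : ℕ) :
    (i, m) ∈ diagOf n t a ↔ i < cntCol n t a m := by
  set S := (univ.filter fun r : Fin n => (r : ℕ) < a ∧ (t r).2 = m).image fun r => (t r).1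
  have hmem : ∀ i, (i, m) ∈ diagOf n t a ↔ i ∈ S := by
    intro i
    simp only [mem_diagOf, S, mem_image, mem_filter, mem_univ, true_and, Prod.ext_iff]
    constructor
    · rintro ⟨r, hra, hr1, hr2⟩; exact ⟨r, ⟨hra, hr2⟩, hr1⟩
    · rintro ⟨r, ⟨hra, hr2⟩, hr1⟩; exact ⟨r, hra, hr1, hr2⟩
  have hcard : #S = cntCol n t a m :=
    card_image_of_injOn fun r hr r' hr' h => ht.1 <| Prod.ext h <| by
      simp only [coe_filter, mem_univ, true_and, Set.mem_ofPred_eq] at hr hr'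
      rw [hr.2, hr'.2]
  have hlower : IsLowerSet (S : Set ℕ) := fun i' i hle hi => by
    simp only [mem_coe, ← hmem] at hi ⊢
    exact ht.mem_diagOf_of_le hi hle le_rfl
  rw [hmem, eq_range_card_of_isLowerSet hlower, mem_range, hcard]

lemma IsStdTab.cntCol_antitone (ht : IsStdTab n t) (a : ℕ) : Antitone (cntCol n t a) := by
  intro m' m hle
  by_cases h0 : cntCol n t a m = 0
  · omega
  have hlast : (cntCol n t a m - 1, m) ∈ diagOf n t a := (ht.mem_diagOf_iff _ _).mpr (by omega)
  have := (ht.mem_diagOf_iff _ _).mp (ht.mem_diagOf_of_le hlast le_rfl hle)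
  omega

lemma cntCol_succ (a : Fin n) (m : ℕ) :
    cntCol n t (a + 1) m = cntCol n t a m + if m = (t a).2 then 1 else 0 := by
  have hsplit : (univ.filter fun r : Fin n => (r : ℕ) < a + 1 ∧ (t r).2 = m) =
      if m = (t a).2 then insert a (univ.filter fun r : Fin n => (r : ℕ) < a ∧ (t r).2 = m)
      else univ.filter fun r : Fin n => (r : ℕ) < a ∧ (t r).2 = m := by
    ext r
    split_ifs with hm <;> simp only [mem_insert, mem_filter, mem_univ, true_and, ← Fin.val_inj]
    · constructor
      · rintro ⟨hr, rfl⟩; omega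
      · rintro (hr | ⟨hr, rfl⟩)
        · rw [Fin.val_inj.mp hr]; omega
        · omega
    · constructor
      · rintro ⟨hr, rfl⟩
        refine ⟨?_, rfl⟩
        rcases Nat.lt_succ_iff_lt_or_eq.mp hr with hr | hr
        · exact hr
        · exact absurd (by rw [Fin.val_inj.mp hr]) hm
      · rintro ⟨hr, rfl⟩; omega
  unfold cntCol
  rw [hsplit]
  split_ifs
  · rw [card_insert_of_notMem (by simp)]
  · rfl

lemma IsStdTab.fst_eq_cntCol (ht : IsStdTab n t) (a : Fin n) : (t a).1 = cntCol n t a (t a).2 := by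
  have hnew := (ht.mem_diagOf_iff _ _).mp (apply_mem_diagOf_succ a)
  have hold : t a ∉ diagOf n t a := fun h => by
    obtain ⟨r, hra, hr⟩ := mem_diagOf.mp h
    exact (ht.1 hr ▸ hra).false
  rw [ht.mem_diagOf_iff, not_lt] at hold
  rw [cntCol_succ, if_pos rfl] at hnew
  omega

lemma IsStdTab.cntCol_lt_cntCol_pred (ht : IsStdTab n t) (a : Fin n) (hj : (t a).2 ≠ 0) :
    cntCol n t a (t a).2 < cntCol n t a ((t a).2 - 1) := by
  have hleft := ht.mem_diagOf_of_le (apply_mem_diagOf_succ a) le_rfl (Nat.sub_le (t a).2 1)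
  rw [ht.mem_diagOf_iff, cntCol_succ, if_neg (by omega), add_zero, ht.fst_eq_cntCol] at hleft
  exact hleft

lemma IsStdTab.snd_le (ht : IsStdTab n t) (a : Fin n) : (t a).2 ≤ a := by
  have hrow : (range ((t a).2 + 1)).image (fun m => (0, m)) ⊆ diagOf n t (a + 1) := by
    intro x hx
    obtain ⟨m, hm, rfl⟩ := mem_image.mp hx
    exact ht.mem_diagOf_of_le (apply_mem_diagOf_succ a) (Nat.zero_le _)
      (Nat.lt_succ_iff.mp (mem_range.mp hm))
  have hrow_card := card_le_card hrow
  rw [card_image_of_injective _ fun m m' h => (Prod.mk.inj h).2, card_range] at hrow_card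
  have hdiag_card : #(diagOf n t (a + 1)) ≤ a + 1 := card_image_le.trans <| by
    rw [Fin.card_filter_val_lt]; exact min_le_right n _
  omega

lemma IsStdTab.dnode_diagOf_succ {e : ℕ} (ht : IsStdTab n t) (he : 2 ≤ e) (a : Fin n) :
    dnode e n (diagOf n t (a + 1)) (t a) =
      ∑ m ∈ range (t a).2, degPairStep e (rootPairing (cntCol n t a) m (t a).2)
        (rootPairing (cntCol n t a) m (t a).2 - 1) := by
  conv_lhs => rw [← Prod.mk.eta (p := t a), ht.fst_eq_cntCol a]
  exact dnode_eq_sum_degPairStep he (ht.cntCol_antitone a) (ht.cntCol_lt_cntCol_pred a)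
    (cntCol_succ a) (fun x => ht.mem_diagOf_iff x.1 x.2) ((cntCol_le a 0).trans a.is_lt.le)
    ((ht.snd_le a).trans a.is_lt.le)

end StandardTableau

theorem stmt7_general (e k n : ℕ) (he : 2 ≤ e)
    (t : Fin n → ℕ × ℕ) (ht : IsStdTab n t) (hcols : ∀ r, (t r).2 < k) :
    tabDeg e n t = pathDegK e k n t := by
  unfold tabDeg pathDegK
  rw [← Fin.sum_univ_eq_sum_range]
  refine sum_congr rfl fun a _ => ?_
  rw [ht.dnode_diagOf_succ he a]
  exact (sum_degPairStep_of_add_single e k (cntCol_succ a) (hcols a)).symm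

theorem stmt7 (e k n : ℕ) (he : 2 ≤ e) (hk : 2 ≤ k)
    (t : Fin n → ℕ × ℕ) (ht : IsStdTab n t) (hcols : ∀ r, (t r).2 < k) :
    tabDeg e n t = pathDegK e k n t :=
  stmt7_general e k n he t ht hcols
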